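/- Assume k ≥ 2. Every vector (x_K, x_S) ∈ ℝᵏ × ℝˢ in the nullspace of A has x_K = 0 if and only if the clique-kernel ck(Sp) = ker(Rᵀ) ∩ range((I − J)⁻¹·R) is the zero subspace. -/

import Mathlib

open Matrix

/-! The all-ones matrix is the rank-one matrix `𝟙 𝟙ᵀ`, so by the matrix determinant lemma
`det (I - J) = 1 - k ≠ 0` for `k ≥ 2`. Writing `J - I = -(I - J)`, the top block row of
`A (x_K, x_S) = 0` says exactly `x_K = (I - J)⁻¹ R x_S` and the bottom one says `Rᵀ x_K = 0`;
hence the `x_K`-components of the null vectors of `A` form precisely the clique-kernel. -/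

namespace Matrix

variable {m n α : Type*} [Fintype m] [Fintype n] [DecidableEq m] [CommRing α]

theorem det_one_sub_of_forall_eq_one (J : Matrix m m α) (hJ : ∀ i j, J i j = 1) :
    (1 - J).det = 1 - Fintype.card m := by
  have hJ' : 1 - J = 1 + vecMulVec (-1 : m → α) 1 := by
    ext i j
    simp [sub_eq_add_neg, hJ]
  rw [hJ', vecMulVec_eq Unit, det_one_add_replicateCol_mul_replicateRow]
  simp [sub_eq_add_neg]

theorem inv_mul_mulVec_eq_iff {B : Matrix m m α} (hB : IsUnit B.det) (R : Matrix m n α)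
    (x : m → α) (y : n → α) : (B⁻¹ * R) *ᵥ y = x ↔ R *ᵥ y = B *ᵥ x := by
  rw [← mulVec_mulVec]
  constructor
  · rintro rfl
    rw [mulVec_mulVec, mul_nonsing_inv _ hB, one_mulVec]
  · intro h
    rw [h, mulVec_mulVec, nonsing_inv_mul _ hB, one_mulVec]

theorem exists_fromBlocks_neg_mulVec_eq_zero_iff {B : Matrix m m α} (hB : IsUnit B.det)
    (R : Matrix m n α) (C : Matrix n m α) (x : m → α) :
    (∃ y, fromBlocks (-B) R C 0 *ᵥ Sum.elim x y = 0) ↔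
      x ∈ LinearMap.ker C.mulVecLin ⊓ LinearMap.range (B⁻¹ * R).mulVecLin := by
  simp only [fromBlocks_mulVec, Sum.elim_comp_inl, Sum.elim_comp_inr, zero_mulVec, add_zero,
    ← Sum.elim_zero_zero, Sum.elim_eq_iff, neg_mulVec, neg_add_eq_zero, Submodule.mem_inf,
    LinearMap.mem_ker, LinearMap.mem_range, mulVecLin_apply, inv_mul_mulVec_eq_iff hB]
  constructor
  · rintro ⟨y, hy, hC⟩
    exact ⟨hC, y, hy.symm⟩
  · rintro ⟨hC, y, hy⟩
    exact ⟨y, hy.symm, hC⟩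

end Matrix

theorem stmt_6_general (k s : ℕ) (hk : 2 ≤ k)
    (R : Matrix (Fin k) (Fin s) ℝ)
    (J : Matrix (Fin k) (Fin k) ℝ) (hJ : ∀ i j, J i j = 1)
    (A : Matrix (Fin k ⊕ Fin s) (Fin k ⊕ Fin s) ℝ)
    (hA : A = Matrix.fromBlocks (J - 1) R Rᵀ 0) :
    (∀ (xK : Fin k → ℝ) (xS : Fin s → ℝ),
        A.mulVec (Sum.elim xK xS) = 0 → xK = 0) ↔
      LinearMap.ker (Matrix.mulVecLin Rᵀ) ⊓
        LinearMap.range (Matrix.mulVecLin ((1 - J)⁻¹ * R)) = ⊥ := by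
  have hdet : IsUnit (1 - J).det := by
    rw [det_one_sub_of_forall_eq_one J hJ, Fintype.card_fin, isUnit_iff_ne_zero, sub_ne_zero]
    exact_mod_cast (by omega : 1 ≠ k)
  rw [Submodule.eq_bot_iff, hA, ← neg_sub]
  simp only [← exists_fromBlocks_neg_mulVec_eq_zero_iff hdet, forall_exists_index]

/-- For `k ≥ 2`, every kernel vector `(x_K, x_S)` of `A` has
`x_K = 0` iff the clique-kernel `ck(Sp) = ker(Rᵀ) ∩ range((I - J)⁻¹ R)` is the
zero subspace. -/
theorem stmt_6 (k s : ℕ) (hk : 2 ≤ k)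
    (R : Matrix (Fin k) (Fin s) ℝ) (hR01 : ∀ i j, R i j = 0 ∨ R i j = 1)
    (J : Matrix (Fin k) (Fin k) ℝ) (hJ : ∀ i j, J i j = 1)
    (A : Matrix (Fin k ⊕ Fin s) (Fin k ⊕ Fin s) ℝ)
    (hA : A = Matrix.fromBlocks (J - 1) R Rᵀ 0) :
    (∀ (xK : Fin k → ℝ) (xS : Fin s → ℝ),
        A.mulVec (Sum.elim xK xS) = 0 → xK = 0) ↔
      LinearMap.ker (Matrix.mulVecLin Rᵀ) ⊓
        LinearMap.range (Matrix.mulVecLin ((1 - J)⁻¹ * R)) = ⊥ :=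
  stmt_6_general k s hk R J hJ A hA
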